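/- Let A and B be positive definite d×d complex matrices and let N(·) be any unitarily invariant norm on M_d(ℂ). Then for every C in the unitary orbit O_B = { U*BU : U unitary }, one has N(log(A^{-1/2} C A^{-1/2})) ≥ N(D_{log λ(B) − log λ(A)}), where D_{log λ(B) − log λ(A)} is the diagonal matrix with diagonal entries log λ_i(B) − log λ_i(A), i = 1, …, d. -/

import Mathlib

open Matrix Polynomial
open scoped ComplexOrder

/-- The vector `x` rearranged in non-increasing order. -/
noncomputable def sortDesc {d : ℕ} (x : Fin d → ℝ) : Fin d → ℝ :=
  fun i => x (Tuple.sort x i.rev)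

/-- The vector `x` rearranged in non-decreasing order. -/
noncomputable def sortAsc {d : ℕ} (x : Fin d → ℝ) : Fin d → ℝ :=
  fun i => x (Tuple.sort x i)

/-- `x` is submajorized by `y`. -/
noncomputable def Submajorizes {d : ℕ} (x y : Fin d → ℝ) : Prop :=
  ∀ k : Fin d, ∑ i ∈ Finset.Iic k, sortDesc x i ≤ ∑ i ∈ Finset.Iic k, sortDesc y i

/-- `x` is majorized by `y`. -/
noncomputable def Majorizes {d : ℕ} (x y : Fin d → ℝ) : Prop :=
  Submajorizes x y ∧ ∑ i, x i = ∑ i, y i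

/-- The (Hermitian) matrix logarithm of a Hermitian (in particular, positive definite)
matrix, defined via the spectral theorem; junk value `0` on non-Hermitian matrices. -/
noncomputable def matLog {d : ℕ} (P : Matrix (Fin d) (Fin d) ℂ) : Matrix (Fin d) (Fin d) ℂ :=
  if h : P.IsHermitian then
    (Matrix.IsHermitian.eigenvectorUnitary h : Matrix (Fin d) (Fin d) ℂ) *
      Matrix.diagonal (fun i => (Real.log (h.eigenvalues i) : ℂ)) *
      (star (Matrix.IsHermitian.eigenvectorUnitary h) : Matrix (Fin d) (Fin d) ℂ)
  else 0

/-- The positive semidefinite square root of a positive semidefinite matrix -/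
noncomputable def Matrix.PosSemidef.sqrt {n 𝕜 : Type*} [Fintype n] [DecidableEq n] [RCLike 𝕜]
    {A : Matrix n n 𝕜} (hA : A.PosSemidef) : Matrix n n 𝕜 :=
  hA.1.eigenvectorUnitary.1 * diagonal ((↑) ∘ (√·) ∘ hA.1.eigenvalues) *
  (star hA.1.eigenvectorUnitary : Matrix n n 𝕜)


/-!
Put `S = A^{1/2}` and `X = S⁻¹ C S⁻¹`, so that `C = S X S`, `λ(C) = λ(B)`, and
`log(A^{-1/2} C A^{-1/2})` is unitarily equivalent to `D_{log λ(X)}`. The vector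
`log λ(C) - log λ(A)` is majorized by `log λ(X)`. The totals agree because
`det C = det A · det X`. For the top `k + 1` entries, let `t = log λ_k(X)` and
`Y = max(X, e^t)`: then `C ≤ S Y S` and `e^t A ≤ S Y S`, so by Courant–Fischer
`log λ_i(C) - log λ_i(A) ≤ log λ_i(SYS) - log λ_i(A)`, and every term on the right is `≥ t`.
Summing over any `k + 1` indices therefore gives at most `log det Y - (d - k - 1) t`, which is
the sum of the `k + 1` largest `log λ_j(X)`.

The map `v ↦ N(D_v)` is convex and invariant under permutations. Such a function is
monotone for majorization: when `x ≺ y` are both sorted, `y` is turned into `x` by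
finitely many transfers between two coordinates, and each transfer lands on the segment
from `y` to a permutation of `y`.
-/

open Finset

section Sorting

variable {d : ℕ}

noncomputable def descPerm (x : Fin d → ℝ) : Equiv.Perm (Fin d) :=
  Fin.revPerm.trans (Tuple.sort x)

lemma sortDesc_eq_comp (x : Fin d → ℝ) : sortDesc x = x ∘ descPerm x := rfl

lemma sortDesc_antitone (x : Fin d → ℝ) : Antitone (sortDesc x) :=
  fun _ _ hij => Tuple.monotone_sort x (Fin.rev_le_rev.mpr hij)

lemma sum_comp_sortDesc (f : ℝ → ℝ) (x : Fin d → ℝ) :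
    ∑ i, f (sortDesc x i) = ∑ i, f (x i) :=
  Equiv.sum_comp (descPerm x) (fun i => f (x i))

lemma sum_Iic_sortDesc_le {x : Fin d → ℝ} {k : Fin d} {c : ℝ}
    (h : ∀ T : Finset (Fin d), #T = k + 1 → ∑ i ∈ T, x i ≤ c) :
    ∑ i ∈ Iic k, sortDesc x i ≤ c := by
  have := h ((Iic k).map (descPerm x).toEmbedding) (by simp)
  rwa [sum_map] at this

lemma sum_max_sortDesc (x : Fin d → ℝ) (k : Fin d) :
    ∑ j, max (x j) (sortDesc x k) = ∑ i ∈ Iic k, sortDesc x i + #(Iic k)ᶜ * sortDesc x k := by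
  rw [← sum_comp_sortDesc (fun s => max s (sortDesc x k)), ← sum_add_sum_compl (Iic k),
    ← nsmul_eq_mul, ← sum_const]
  congr 1
  · exact sum_congr rfl fun i hi => max_eq_left (sortDesc_antitone x (mem_Iic.mp hi))
  · refine sum_congr rfl fun i hi => max_eq_right (sortDesc_antitone x ?_)
    exact (by simpa using hi : k < i).le

end Sorting

section Transfer

variable {ι : Type*} [DecidableEq ι]

def transfer (v : ι → ℝ) (j k : ι) (δ : ℝ) : ι → ℝ :=
  v + Pi.single k δ - Pi.single j δ

lemma transfer_apply_of_ne {v : ι → ℝ} {j k i : ι} {δ : ℝ} (hij : i ≠ j) (hik : i ≠ k) :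
    transfer v j k δ i = v i := by
  simp [transfer, hij, hik]

lemma transfer_mem_segment {v : ι → ℝ} {j k : ι} {δ : ℝ} (hjk : j ≠ k) (hδ : 0 ≤ δ)
    (hδv : δ ≤ v j - v k) : transfer v j k δ ∈ segment ℝ v (v ∘ Equiv.swap j k) := by
  rcases hδ.eq_or_lt with rfl | hδ
  · simpa [transfer] using left_mem_segment ℝ v (v ∘ Equiv.swap j k)
  have hv : 0 < v j - v k := hδ.trans_le hδv
  refine ⟨1 - δ / (v j - v k), δ / (v j - v k), by rw [sub_nonneg, div_le_one hv]; exact hδv,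
    by positivity, by ring, ?_⟩
  funext i
  simp only [transfer, Pi.add_apply, Pi.sub_apply, Pi.smul_apply, smul_eq_mul,
    Function.comp_apply, Pi.single_apply, Equiv.swap_apply_def]
  split_ifs <;> subst_vars <;> first | exact absurd rfl hjk | (field_simp; ring)

end Transfer

section TransferFin

variable {d : ℕ} {w v : Fin d → ℝ} {j k : Fin d} {δ : ℝ}

lemma antitone_transfer (hv : Antitone v) (hw : Antitone w) (hjk : j < k) (hδ : 0 ≤ δ)
    (hj : δ ≤ v j - w j) (hk : δ ≤ w k - v k) (hbetween : ∀ i, j < i → i < k → w i = v i) :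
    Antitone (transfer v j k δ) := by
  have hwjk := hw hjk.le
  have below_k : ∀ i < k, i ≠ j → v k + δ ≤ v i := by
    intro i hik hij
    rcases lt_or_gt_of_ne hij with hij | hij
    · linarith [hv hij.le]
    · linarith [hbetween i hij hik, hw hik.le]
  have above_j : ∀ i, j < i → i ≠ k → v i ≤ v j - δ := by
    intro i hji hik
    rcases lt_or_gt_of_ne hik with hik | hik
    · linarith [hbetween i hji hik, hw hji.le]
    · linarith [hv hik.le]
  intro a b hab
  simp only [transfer, Pi.add_apply, Pi.sub_apply, Pi.single_apply]
  have := hv hab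
  split_ifs <;> subst_vars <;> try linarith
  · linarith [below_k a (lt_of_le_of_ne hab ‹_›) ‹_›]
  · linarith [above_j b (lt_of_le_of_ne hab (Ne.symm ‹_›)) ‹_›]

lemma sum_Iic_le_sum_Iic_transfer (hpre : ∀ n, ∑ i ∈ Iic n, w i ≤ ∑ i ∈ Iic n, v i)
    (hjk : j < k) (hj : δ ≤ v j - w j) (hbelow : ∀ i < k, w i ≤ v i) (n : Fin d) :
    ∑ i ∈ Iic n, w i ≤ ∑ i ∈ Iic n, transfer v j k δ i := by
  simp only [transfer, Pi.add_apply, Pi.sub_apply, sum_add_distrib, sum_sub_distrib,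
    sum_pi_single', mem_Iic]
  have := hpre n
  split_ifs with hkn hjn hjn <;> try linarith
  · exact absurd (hjk.trans_le hkn).le hjn
  · have hnk : n < k := lt_of_not_ge hkn
    have : v j - w j ≤ ∑ i ∈ Iic n, (v i - w i) :=
      single_le_sum (f := fun i => v i - w i)
        (fun i hi => sub_nonneg.mpr (hbelow i ((mem_Iic.mp hi).trans_lt hnk))) (mem_Iic.mpr hjn)
    rw [sum_sub_distrib] at this
    linarith

lemma sum_transfer (v : Fin d → ℝ) (j k : Fin d) (δ : ℝ) :
    ∑ i, transfer v j k δ i = ∑ i, v i := by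
  simp [transfer, sum_add_distrib, sum_sub_distrib]

lemma card_ne_transfer_lt (hjk : j ≠ k) (hj : w j < v j) (hk : v k < w k) :
    #{i | w i ≠ transfer v j k (min (v j - w j) (w k - v k)) i} < #{i | w i ≠ v i} := by
  apply card_lt_card
  rw [ssubset_iff_of_subset]
  · rcases min_choice (v j - w j) (w k - v k) with hmin | hmin
    · exact ⟨j, by simp [hj.ne], by simp [transfer, Pi.single_apply, hjk, hmin]⟩
    · exact ⟨k, by simp [hk.ne'], by simp [transfer, Pi.single_apply, hjk.symm, hmin]⟩
  · intro i
    simp only [mem_filter, mem_univ, true_and]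
    intro hi heq
    rcases eq_or_ne i j with rfl | hij
    · exact hj.ne heq
    rcases eq_or_ne i k with rfl | hik
    · exact hk.ne' heq
    exact hi (by rw [transfer_apply_of_ne hij hik, heq])

end TransferFin

section Schur

variable {d : ℕ} {w v : Fin d → ℝ}

lemma exists_transfer_indices (hpre : ∀ n, ∑ i ∈ Iic n, w i ≤ ∑ i ∈ Iic n, v i)
    (hsum : ∑ i, w i = ∑ i, v i) (hne : w ≠ v) :
    ∃ j k, j < k ∧ w j < v j ∧ v k < w k ∧ (∀ i < k, w i ≤ v i) ∧
      ∀ i, j < i → i < k → w i = v i := by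
  have hK : (univ.filter fun i => v i < w i).Nonempty := by
    by_contra hK
    simp only [not_nonempty_iff_eq_empty, filter_eq_empty_iff, mem_univ, true_implies,
      not_lt] at hK
    exact hne (funext fun i => (sum_eq_sum_iff_of_le fun i _ => @hK i).mp hsum i (mem_univ i))
  obtain ⟨k, hk, hkmin⟩ := exists_min_image _ id hK
  simp only [mem_filter, mem_univ, true_and, id] at hk hkmin
  have hbelow : ∀ i < k, w i ≤ v i := fun i hi => le_of_not_gt fun h => (hkmin i h).not_gt hi
  have hJ : (univ.filter fun i => i < k ∧ w i < v i).Nonempty := by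
    by_contra hJ
    simp only [not_nonempty_iff_eq_empty, filter_eq_empty_iff, mem_univ, true_implies,
      not_and, not_lt] at hJ
    have hIio : ∑ i ∈ Iio k, w i = ∑ i ∈ Iio k, v i :=
      sum_congr rfl fun i hi => le_antisymm (hbelow i (mem_Iio.mp hi)) (hJ (mem_Iio.mp hi))
    have := hpre k
    rw [← Iio_insert, sum_insert (by simp), sum_insert (by simp)] at this
    linarith
  obtain ⟨j, hj, hjmax⟩ := exists_max_image _ id hJ
  simp only [mem_filter, mem_univ, true_and, id] at hj hjmax
  exact ⟨j, k, hj.1, hj.2, hk, hbelow, fun i hji hik =>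
    le_antisymm (hbelow i hik) (le_of_not_gt fun h => (hjmax i ⟨hik, h⟩).not_gt hji)⟩

lemma exists_transfer_step (hv : Antitone v) (hw : Antitone w)
    (hpre : ∀ n, ∑ i ∈ Iic n, w i ≤ ∑ i ∈ Iic n, v i) (hsum : ∑ i, w i = ∑ i, v i)
    (hne : w ≠ v) :
    ∃ j k, ∃ v' ∈ segment ℝ v (v ∘ Equiv.swap j k), Antitone v' ∧
      (∀ n, ∑ i ∈ Iic n, w i ≤ ∑ i ∈ Iic n, v' i) ∧ ∑ i, w i = ∑ i, v' i ∧
      #{i | w i ≠ v' i} < #{i | w i ≠ v i} := by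
  obtain ⟨j, k, hjk, hj, hk, hbelow, hbetween⟩ := exists_transfer_indices hpre hsum hne
  set δ := min (v j - w j) (w k - v k)
  have hδ : 0 ≤ δ := le_min (by linarith) (by linarith)
  have hδj : δ ≤ v j - w j := min_le_left _ _
  have hδk : δ ≤ w k - v k := min_le_right _ _
  refine ⟨j, k, transfer v j k δ,
    transfer_mem_segment hjk.ne hδ (by linarith [hw hjk.le]),
    antitone_transfer hv hw hjk hδ hδj hδk hbetween,
    sum_Iic_le_sum_Iic_transfer hpre hjk hδj hbelow, by rw [sum_transfer, hsum],
    card_ne_transfer_lt hjk.ne hj hk⟩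

variable {Φ : (Fin d → ℝ) → ℝ}

theorem ConvexOn.le_of_sum_Iic_le (hΦ : ConvexOn ℝ Set.univ Φ)
    (hperm : ∀ v (σ : Equiv.Perm (Fin d)), Φ (v ∘ σ) = Φ v) (hw : Antitone w) (hv : Antitone v)
    (hpre : ∀ n, ∑ i ∈ Iic n, w i ≤ ∑ i ∈ Iic n, v i) (hsum : ∑ i, w i = ∑ i, v i) :
    Φ w ≤ Φ v := by
  induction hn : #{i | w i ≠ v i} using Nat.strong_induction_on generalizing v with
  | _ n ih =>
    by_cases hwv : w = v
    · rw [hwv]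
    obtain ⟨j, k, v', hseg, hv', hpre', hsum', hcard⟩ := exists_transfer_step hv hw hpre hsum hwv
    calc Φ w ≤ Φ v' := ih _ (hn ▸ hcard) hv' hpre' hsum' rfl
      _ ≤ max (Φ v) (Φ (v ∘ Equiv.swap j k)) := hΦ.le_on_segment trivial trivial hseg
      _ = Φ v := by rw [hperm, max_self]

theorem ConvexOn.le_of_majorizes (hΦ : ConvexOn ℝ Set.univ Φ)
    (hperm : ∀ v (σ : Equiv.Perm (Fin d)), Φ (v ∘ σ) = Φ v) {x y : Fin d → ℝ}
    (h : Majorizes x y) : Φ x ≤ Φ y := by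
  have := hΦ.le_of_sum_Iic_le hperm (sortDesc_antitone x) (sortDesc_antitone y) h.1
    (by rw [sum_comp_sortDesc (fun t => t), sum_comp_sortDesc (fun t => t), h.2])
  rwa [sortDesc_eq_comp, sortDesc_eq_comp, hperm, hperm] at this

end Schur

section CourantFischer

variable {d : ℕ}

noncomputable def quadForm (M : Matrix (Fin d) (Fin d) ℂ) (x : Fin d → ℂ) : ℝ :=
  (star x ⬝ᵥ (M *ᵥ x)).re

lemma quadForm_conj_diagonal (U : unitaryGroup (Fin d) ℂ) (f : Fin d → ℝ) (x : Fin d → ℂ) :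
    quadForm ((U : Matrix (Fin d) (Fin d) ℂ) * diagonal (fun j => (f j : ℂ)) *
      (star U : Matrix (Fin d) (Fin d) ℂ)) x =
      ∑ j, f j * Complex.normSq ((star (U : Matrix (Fin d) (Fin d) ℂ) *ᵥ x) j) := by
  have hstar : star (star (U : Matrix (Fin d) (Fin d) ℂ) *ᵥ x) = star x ᵥ* U := by
    rw [star_mulVec, star_eq_conjTranspose, conjTranspose_conjTranspose]
  rw [quadForm, ← mulVec_mulVec, ← mulVec_mulVec, dotProduct_mulVec, ← hstar, dotProduct,
    Complex.re_sum]
  refine sum_congr rfl fun j _ => ?_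
  rw [mulVec_diagonal, Pi.star_apply, mul_left_comm, RCLike.star_def,
    ← Complex.normSq_eq_conj_mul_self, ← Complex.ofReal_mul, Complex.ofReal_re]

lemma quadForm_one_eq (U : unitaryGroup (Fin d) ℂ) (x : Fin d → ℂ) :
    quadForm 1 x = ∑ j, Complex.normSq ((star (U : Matrix (Fin d) (Fin d) ℂ) *ᵥ x) j) := by
  have h := quadForm_conj_diagonal U 1 x
  simp only [Pi.one_apply, Complex.ofReal_one, one_mul] at h
  rwa [diagonal_one, Matrix.mul_one, mem_unitaryGroup_iff.mp U.2] at h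

lemma Matrix.IsHermitian.quadForm_eq {M : Matrix (Fin d) (Fin d) ℂ} (hM : M.IsHermitian)
    (x : Fin d → ℂ) :
    quadForm M x = ∑ j, hM.eigenvalues j *
      Complex.normSq ((star (hM.eigenvectorUnitary : Matrix (Fin d) (Fin d) ℂ) *ᵥ x) j) := by
  conv_lhs => rw [hM.spectral_theorem, Unitary.conjStarAlgAut_apply]
  exact quadForm_conj_diagonal _ _ x

lemma quadForm_one_pos {x : Fin d → ℂ} (hx : x ≠ 0) : 0 < quadForm 1 x := by
  simpa [quadForm] using (Complex.lt_def.mp (dotProduct_star_self_pos_iff.mpr hx)).1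

noncomputable def unitaryBasis (U : unitaryGroup (Fin d) ℂ) : Module.Basis (Fin d) ℂ (Fin d → ℂ) :=
  (Pi.basisFun ℂ (Fin d)).map (UnitaryGroup.toLinearEquiv U)

lemma finrank_span_unitaryBasis (U : unitaryGroup (Fin d) ℂ) (J : Finset (Fin d)) :
    Module.finrank ℂ (Submodule.span ℂ (unitaryBasis U '' J)) = #J := by
  rw [Set.image_eq_range]
  exact (finrank_span_eq_card
    ((unitaryBasis U).linearIndependent.comp _ Subtype.val_injective)).trans (by simp)

lemma star_mulVec_apply_eq_zero_of_mem_span (U : unitaryGroup (Fin d) ℂ) {J : Finset (Fin d)}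
    {x : Fin d → ℂ} (hx : x ∈ Submodule.span ℂ (unitaryBasis U '' J)) {j : Fin d} (hj : j ∉ J) :
    (star (U : Matrix (Fin d) (Fin d) ℂ) *ᵥ x) j = 0 := by
  have hsupp := (unitaryBasis U).mem_span_image.mp hx
  exact Finsupp.notMem_support_iff.mp fun h => hj (by simpa using hsupp h)

variable {M M' : Matrix (Fin d) (Fin d) ℂ}

lemma Matrix.IsHermitian.le_sortDesc_eigenvalues (hM : M.IsHermitian) {i : Fin d}
    {W : Submodule ℂ (Fin d → ℂ)} (hW : Module.finrank ℂ W = i + 1) {c : ℝ}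
    (hc : ∀ x ∈ W, c * quadForm 1 x ≤ quadForm M x) : c ≤ sortDesc hM.eigenvalues i := by
  set U := hM.eigenvectorUnitary
  set E := Submodule.span ℂ (unitaryBasis U '' ((Ici i).map (descPerm hM.eigenvalues).toEmbedding))
  have hE : Module.finrank ℂ E = d - i := by
    simp [E, finrank_span_unitaryBasis]
  obtain ⟨x, hx, hx0⟩ : ∃ x ∈ W ⊓ E, x ≠ 0 := by
    refine (Submodule.ne_bot_iff _).mp fun h => ?_
    have hdim := Submodule.finrank_sup_add_finrank_inf_eq W E
    have hle := Submodule.finrank_le (W ⊔ E)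
    rw [h, finrank_bot, hW, hE] at hdim
    simp only [Module.finrank_fintype_fun_eq_card, Fintype.card_fin] at hle
    omega
  have hupper : quadForm M x ≤ sortDesc hM.eigenvalues i * quadForm 1 x := by
    rw [hM.quadForm_eq, quadForm_one_eq U, mul_sum]
    refine sum_le_sum fun j _ => ?_
    by_cases hj : j ∈ (Ici i).map (descPerm hM.eigenvalues).toEmbedding
    · obtain ⟨t, ht, rfl⟩ := mem_map.mp hj
      have : sortDesc hM.eigenvalues t ≤ sortDesc hM.eigenvalues i :=
        sortDesc_antitone _ (mem_Ici.mp ht)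
      exact mul_le_mul_of_nonneg_right this (Complex.normSq_nonneg _)
    · rw [star_mulVec_apply_eq_zero_of_mem_span U (Submodule.mem_inf.mp hx).2 hj]
      simp
  exact le_of_mul_le_mul_right ((hc x (Submodule.mem_inf.mp hx).1).trans hupper)
    (quadForm_one_pos hx0)

lemma Matrix.IsHermitian.exists_finrank_eq_le_quadForm (hM : M.IsHermitian) (i : Fin d) :
    ∃ W : Submodule ℂ (Fin d → ℂ), Module.finrank ℂ W = i + 1 ∧
      ∀ x ∈ W, sortDesc hM.eigenvalues i * quadForm 1 x ≤ quadForm M x := by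
  set U := hM.eigenvectorUnitary
  set J := (Iic i).map (descPerm hM.eigenvalues).toEmbedding
  refine ⟨Submodule.span ℂ (unitaryBasis U '' J), by simp [J, finrank_span_unitaryBasis],
    fun x hx => ?_⟩
  rw [hM.quadForm_eq, quadForm_one_eq U, mul_sum]
  refine sum_le_sum fun j _ => ?_
  by_cases hj : j ∈ J
  · obtain ⟨t, ht, rfl⟩ := mem_map.mp hj
    have : sortDesc hM.eigenvalues i ≤ sortDesc hM.eigenvalues t :=
      sortDesc_antitone _ (mem_Iic.mp ht)
    exact mul_le_mul_of_nonneg_right this (Complex.normSq_nonneg _)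
  · rw [star_mulVec_apply_eq_zero_of_mem_span U hx hj]
    simp

theorem Matrix.IsHermitian.mul_sortDesc_eigenvalues_le (hM : M.IsHermitian)
    (hM' : M'.IsHermitian) {c : ℝ} (hc : 0 ≤ c) (h : ∀ x, c * quadForm M x ≤ quadForm M' x)
    (i : Fin d) : c * sortDesc hM.eigenvalues i ≤ sortDesc hM'.eigenvalues i := by
  obtain ⟨W, hW, hWM⟩ := hM.exists_finrank_eq_le_quadForm i
  refine hM'.le_sortDesc_eigenvalues hW fun x hx => ?_
  rw [mul_assoc]
  exact (mul_le_mul_of_nonneg_left (hWM x hx) hc).trans (h x)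

end CourantFischer

section Truncation

variable {d : ℕ} {M X : Matrix (Fin d) (Fin d) ℂ}

lemma quadForm_conjTranspose_mul_mul (S M : Matrix (Fin d) (Fin d) ℂ) (x : Fin d → ℂ) :
    quadForm (Sᴴ * M * S) x = quadForm M (S *ᵥ x) := by
  rw [quadForm, quadForm, ← mulVec_mulVec, ← mulVec_mulVec, dotProduct_mulVec, star_mulVec]

lemma Matrix.IsHermitian.sum_log_sortDesc_eigenvalues (hM : M.IsHermitian)
    (hpos : ∀ i, 0 < sortDesc hM.eigenvalues i) {r : ℝ} (hr : M.det = r) :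
    ∑ i, Real.log (sortDesc hM.eigenvalues i) = Real.log r := by
  rw [← Real.log_prod fun i _ => (hpos i).ne', sortDesc_eq_comp]
  simp only [Function.comp_apply]
  rw [Equiv.prod_comp (descPerm hM.eigenvalues) hM.eigenvalues]
  congr 1
  apply Complex.ofReal_injective
  simpa [hr] using hM.det_eq_prod_eigenvalues.symm

/-- `Y = max(X, exp t)` in the functional calculus of `X`. -/
lemma Matrix.IsHermitian.exists_truncation (hX : X.IsHermitian) (t : ℝ) :
    ∃ Y : Matrix (Fin d) (Fin d) ℂ, Y.IsHermitian ∧ (∀ x, quadForm X x ≤ quadForm Y x) ∧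
      (∀ x, Real.exp t * quadForm 1 x ≤ quadForm Y x) ∧
      Y.det = ((∏ j, Real.exp (max (Real.log (hX.eigenvalues j)) t) : ℝ) : ℂ) := by
  set V := hX.eigenvectorUnitary
  set f := fun j => Real.exp (max (Real.log (hX.eigenvalues j)) t)
  refine ⟨V * diagonal (fun j => (f j : ℂ)) * (star V : Matrix (Fin d) (Fin d) ℂ), ?_, ?_, ?_, ?_⟩
  · rw [star_eq_conjTranspose]
    exact isHermitian_mul_mul_conjTranspose _
      (isHermitian_diagonal_of_self_adjoint _ (funext fun j => Complex.conj_ofReal _))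
  · intro x
    rw [hX.quadForm_eq, quadForm_conj_diagonal]
    refine sum_le_sum fun j _ => mul_le_mul_of_nonneg_right ?_ (Complex.normSq_nonneg _)
    exact (Real.le_exp_log _).trans (Real.exp_le_exp.mpr (le_max_left _ _))
  · intro x
    rw [quadForm_one_eq V, quadForm_conj_diagonal, mul_sum]
    refine sum_le_sum fun j _ => mul_le_mul_of_nonneg_right ?_ (Complex.normSq_nonneg _)
    exact Real.exp_le_exp.mpr (le_max_right _ _)
  · rw [det_mul, det_mul, mul_right_comm, ← det_mul, mem_unitaryGroup_iff.mp V.2, det_one,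
      one_mul, det_diagonal]
    push_cast
    rfl

end Truncation

lemma sum_le_sum_sub_card_compl_mul {ι : Type*} [Fintype ι] [DecidableEq ι] {u g : ι → ℝ}
    {t : ℝ} (hug : ∀ i, u i ≤ g i) (hg : ∀ i, t ≤ g i) (T : Finset ι) :
    ∑ i ∈ T, u i ≤ ∑ i, g i - #Tᶜ * t := by
  have hT := sum_le_sum fun i (_ : i ∈ T) => hug i
  have hTc := card_nsmul_le_sum Tᶜ g t fun i _ => hg i
  rw [nsmul_eq_mul] at hTc
  linarith [sum_add_sum_compl T g]

section KeyInequality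

variable {d : ℕ} {A C X S : Matrix (Fin d) (Fin d) ℂ}

/-- `p` is the spectrum of `S (max(X, exp t)) S`. -/
lemma exists_eigenvalue_bounds (hA : A.PosDef) (hC : C.IsHermitian) (hX : X.IsHermitian)
    (hS : S.IsHermitian) (hSS : S * S = A) (hCX : C = S * X * S) (t : ℝ) :
    ∃ p : Fin d → ℝ, (∀ i, sortDesc hC.eigenvalues i ≤ p i) ∧
      (∀ i, Real.exp t * sortDesc hA.isHermitian.eigenvalues i ≤ p i) ∧
      ∑ i, Real.log (p i) = ∑ i, Real.log (sortDesc hA.isHermitian.eigenvalues i) +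
        ∑ j, max (Real.log (hX.eigenvalues j)) t := by
  obtain ⟨Y, hY, hXY, hYt, hdetY⟩ := hX.exists_truncation t
  have hP : (Sᴴ * Y * S).IsHermitian := isHermitian_conjTranspose_mul_mul S hY
  have hC' : C = Sᴴ * X * S := by rw [hCX, hS.eq]
  have hA' : A = Sᴴ * 1 * S := by rw [hS.eq, Matrix.mul_one, hSS]
  have hCP := hC.mul_sortDesc_eigenvalues_le hP zero_le_one fun x => by
    rw [one_mul, hC', quadForm_conjTranspose_mul_mul, quadForm_conjTranspose_mul_mul]
    exact hXY _
  have hAP := hA.isHermitian.mul_sortDesc_eigenvalues_le hP (Real.exp_pos t).le fun x => by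
    rw [hA', quadForm_conjTranspose_mul_mul, quadForm_conjTranspose_mul_mul]
    exact hYt _
  have ha : ∀ i, 0 < sortDesc hA.isHermitian.eigenvalues i := fun i => hA.eigenvalues_pos _
  have hdetA : A.det = ((∏ j, hA.isHermitian.eigenvalues j : ℝ) : ℂ) := by
    simpa using hA.isHermitian.det_eq_prod_eigenvalues
  have hdetP : (Sᴴ * Y * S).det = ((∏ j, hA.isHermitian.eigenvalues j) *
      ∏ j, Real.exp (max (Real.log (hX.eigenvalues j)) t) : ℝ) := by
    rw [det_mul, det_mul, mul_right_comm, hdetY,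
      show Sᴴ.det * S.det = A.det by rw [hA', det_mul, det_mul, det_one, mul_one], hdetA]
    push_cast
    rfl
  refine ⟨sortDesc hP.eigenvalues, fun i => (one_mul _).symm.trans_le (hCP i), hAP, ?_⟩
  rw [hP.sum_log_sortDesc_eigenvalues (fun i => (mul_pos (Real.exp_pos t) (ha i)).trans_le (hAP i))
      hdetP, hA.isHermitian.sum_log_sortDesc_eigenvalues ha hdetA,
    Real.log_mul (prod_pos fun j _ => hA.eigenvalues_pos j).ne'
      (prod_pos fun j _ => Real.exp_pos _).ne', ← Real.exp_sum, Real.log_exp]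

theorem sum_log_sortDesc_eigenvalues_sub_le (hA : A.PosDef) (hC : C.PosDef) (hX : X.IsHermitian)
    (hS : S.IsHermitian) (hSS : S * S = A) (hCX : C = S * X * S) (k : Fin d)
    {T : Finset (Fin d)} (hT : #T = k + 1) :
    ∑ i ∈ T, (Real.log (sortDesc hC.isHermitian.eigenvalues i) -
        Real.log (sortDesc hA.isHermitian.eigenvalues i)) ≤
      ∑ i ∈ Iic k, sortDesc (fun j => Real.log (hX.eigenvalues j)) i := by
  set t := sortDesc (fun j => Real.log (hX.eigenvalues j)) k
  obtain ⟨p, hCp, hAp, hsum⟩ := exists_eigenvalue_bounds hA hC.isHermitian hX hS hSS hCX t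
  set a := sortDesc hA.isHermitian.eigenvalues
  have ha : ∀ i, 0 < a i := fun i => hA.eigenvalues_pos _
  have hlog_Cp : ∀ i, Real.log (sortDesc hC.isHermitian.eigenvalues i) ≤ Real.log (p i) :=
    fun i => Real.log_le_log (hC.eigenvalues_pos _) (hCp i)
  have hlog_Ap : ∀ i, t + Real.log (a i) ≤ Real.log (p i) := fun i => by
    rw [← Real.log_exp t, ← Real.log_mul (Real.exp_pos t).ne' (ha i).ne']
    exact Real.log_le_log (mul_pos (Real.exp_pos t) (ha i)) (hAp i)
  calc _ ≤ ∑ i, (Real.log (p i) - Real.log (a i)) - #Tᶜ * t :=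
        sum_le_sum_sub_card_compl_mul (fun i => by linarith [hlog_Cp i])
          (fun i => by linarith [hlog_Ap i]) T
    _ = ∑ i ∈ Iic k, sortDesc (fun j => Real.log (hX.eigenvalues j)) i := by
      rw [sum_sub_distrib, hsum, sum_max_sortDesc, card_compl, card_compl, hT, Fin.card_Iic]
      ring

end KeyInequality

section UnitarilyInvariant

variable {d : ℕ} {N : Matrix (Fin d) (Fin d) ℂ → ℝ}

lemma Matrix.diagonal_comp_perm {n R : Type*} [Fintype n] [DecidableEq n] [CommRing R]
    [StarRing R] (v : n → R) (σ : Equiv.Perm n) :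
    diagonal (v ∘ σ) = σ.permMatrix R * diagonal v * (σ.permMatrix R)ᴴ := by
  rw [conjTranspose_permMatrix, Equiv.Perm.permMatrix, Equiv.Perm.permMatrix,
    PEquiv.toMatrix_toPEquiv_mul, PEquiv.mul_toMatrix_toPEquiv, submatrix_submatrix]
  exact (submatrix_diagonal_equiv v σ).symm

lemma Matrix.permMatrix_mem_unitaryGroup {n R : Type*} [Fintype n] [DecidableEq n] [CommRing R]
    [StarRing R] (σ : Equiv.Perm n) : σ.permMatrix R ∈ unitaryGroup n R := by
  rw [mem_unitaryGroup_iff, star_eq_conjTranspose, conjTranspose_permMatrix, ← permMatrix_mul,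
    inv_mul_cancel, permMatrix_one]

lemma convexOn_comp_diagonal (hN_add : ∀ X Y, N (X + Y) ≤ N X + N Y)
    (hN_smul : ∀ (c : ℂ) (X), N (c • X) = ‖c‖ * N X) :
    ConvexOn ℝ Set.univ fun v : Fin d → ℝ => N (diagonal fun i => (v i : ℂ)) := by
  refine ⟨convex_univ, fun x _ y _ a b ha hb _ => ?_⟩
  have hdiag : (diagonal fun i => ((a • x + b • y) i : ℂ)) =
      (a : ℂ) • diagonal (fun i => (x i : ℂ)) + (b : ℂ) • diagonal (fun i => (y i : ℂ)) := by
    rw [← diagonal_smul, ← diagonal_smul, diagonal_add]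
    congr 1
    ext i
    simp
  simp only [hdiag]
  refine (hN_add _ _).trans_eq ?_
  rw [hN_smul, hN_smul, Complex.norm_real, Complex.norm_real, Real.norm_of_nonneg ha,
    Real.norm_of_nonneg hb, smul_eq_mul, smul_eq_mul]

lemma comp_diagonal_comp_perm (hN_ui : ∀ (X U V : Matrix (Fin d) (Fin d) ℂ),
      U ∈ unitaryGroup (Fin d) ℂ → V ∈ unitaryGroup (Fin d) ℂ → N (U * X * V) = N X)
    (v : Fin d → ℝ) (σ : Equiv.Perm (Fin d)) :
    N (diagonal fun i => ((v ∘ σ) i : ℂ)) = N (diagonal fun i => (v i : ℂ)) := by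
  rw [show (fun i => ((v ∘ σ) i : ℂ)) = (fun i => (v i : ℂ)) ∘ σ from rfl, diagonal_comp_perm]
  exact hN_ui _ _ _ (permMatrix_mem_unitaryGroup σ)
    (by simpa using permMatrix_mem_unitaryGroup σ⁻¹)

lemma comp_matLog (hN_ui : ∀ (X U V : Matrix (Fin d) (Fin d) ℂ),
      U ∈ unitaryGroup (Fin d) ℂ → V ∈ unitaryGroup (Fin d) ℂ → N (U * X * V) = N X)
    {X : Matrix (Fin d) (Fin d) ℂ} (hX : X.IsHermitian) :
    N (matLog X) = N (diagonal fun j => (Real.log (hX.eigenvalues j) : ℂ)) := by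
  rw [matLog, dif_pos hX]
  exact hN_ui _ _ _ hX.eigenvectorUnitary.2 (Unitary.star_mem hX.eigenvectorUnitary.2)

end UnitarilyInvariant

section Sqrt

variable {n 𝕜 : Type*} [Fintype n] [DecidableEq n] [RCLike 𝕜] {A : Matrix n n 𝕜}

lemma Matrix.PosSemidef.isHermitian_sqrt (hA : A.PosSemidef) : hA.sqrt.IsHermitian := by
  rw [PosSemidef.sqrt, star_eq_conjTranspose]
  exact isHermitian_mul_mul_conjTranspose _
    (isHermitian_diagonal_of_self_adjoint _ (funext fun j => RCLike.conj_ofReal _))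

lemma Matrix.PosSemidef.sqrt_mul_self (hA : A.PosSemidef) : hA.sqrt * hA.sqrt = A := by
  have hspec := hA.1.spectral_theorem
  rw [Unitary.conjStarAlgAut_apply] at hspec
  set V := hA.1.eigenvectorUnitary
  rw [PosSemidef.sqrt]
  simp only [Matrix.mul_assoc]
  rw [← Matrix.mul_assoc (star (V : Matrix n n 𝕜)), mem_unitaryGroup_iff'.mp V.2, Matrix.one_mul,
    ← Matrix.mul_assoc (diagonal _), diagonal_mul_diagonal, ← Matrix.mul_assoc]
  refine Eq.trans ?_ hspec.symm
  congr 3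
  funext i
  simp [← RCLike.ofReal_mul, Real.mul_self_sqrt (hA.eigenvalues_nonneg i)]

lemma Matrix.PosDef.isUnit_sqrt (hA : A.PosDef) : IsUnit hA.posSemidef.sqrt := by
  rw [isUnit_iff_isUnit_det, isUnit_iff_ne_zero]
  intro h
  have := congrArg det hA.posSemidef.sqrt_mul_self
  rw [det_mul, h, zero_mul] at this
  exact hA.det_pos.ne' this.symm

end Sqrt

lemma Matrix.mul_nonsing_inv_mul_nonsing_inv_mul {n R : Type*} [Fintype n] [DecidableEq n]
    [CommRing R] {S : Matrix n n R} (hS : IsUnit S.det) (C : Matrix n n R) :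
    S * (S⁻¹ * C * S⁻¹) * S = C := by
  rw [show S * (S⁻¹ * C * S⁻¹) * S = S * S⁻¹ * C * (S⁻¹ * S) by simp only [Matrix.mul_assoc],
    mul_nonsing_inv S hS, nonsing_inv_mul S hS, Matrix.one_mul, Matrix.mul_one]

section Orbit

variable {d : ℕ} {A B C X S U : Matrix (Fin d) (Fin d) ℂ}

lemma Matrix.IsHermitian.eigenvalues_conjTranspose_mul_mul (hB : B.IsHermitian)
    (hU : U ∈ unitaryGroup (Fin d) ℂ) (hC : (Uᴴ * B * U).IsHermitian) :
    hC.eigenvalues = hB.eigenvalues := by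
  refine (hC.eigenvalues_eq_eigenvalues_iff hB).mpr ?_
  rw [charpoly_mul_comm, ← Matrix.mul_assoc, ← star_eq_conjTranspose,
    mem_unitaryGroup_iff.mp hU, Matrix.one_mul]

theorem majorizes_log_eigenvalues (hA : A.PosDef) (hC : C.PosDef) (hX : X.PosDef)
    (hS : S.IsHermitian) (hSS : S * S = A) (hCX : C = S * X * S) :
    Majorizes (fun i => Real.log (sortDesc hC.isHermitian.eigenvalues i) -
        Real.log (sortDesc hA.isHermitian.eigenvalues i))
      (fun j => Real.log (hX.isHermitian.eigenvalues j)) := by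
  refine ⟨fun k => sum_Iic_sortDesc_le fun T hT =>
    sum_log_sortDesc_eigenvalues_sub_le hA hC hX.isHermitian hS hSS hCX k hT, ?_⟩
  have hdet : ∀ {M : Matrix (Fin d) (Fin d) ℂ} (hM : M.PosDef),
      M.det = ((∏ j, hM.isHermitian.eigenvalues j : ℝ) : ℂ) := fun hM => by
    simpa using hM.isHermitian.det_eq_prod_eigenvalues
  have hdetC : C.det = ((∏ j, hA.isHermitian.eigenvalues j) *
      ∏ j, hX.isHermitian.eigenvalues j : ℝ) := by
    rw [hCX, det_mul, det_mul, mul_right_comm, ← det_mul, hSS, hdet hA, hdet hX]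
    push_cast
    rfl
  rw [sum_sub_distrib, hC.isHermitian.sum_log_sortDesc_eigenvalues (fun i => hC.eigenvalues_pos _)
      hdetC, hA.isHermitian.sum_log_sortDesc_eigenvalues (fun i => hA.eigenvalues_pos _) (hdet hA),
    Real.log_mul (prod_pos fun j _ => hA.eigenvalues_pos j).ne'
      (prod_pos fun j _ => hX.eigenvalues_pos j).ne',
    Real.log_prod fun j _ => (hX.eigenvalues_pos j).ne']
  ring

end Orbit

theorem lower_bound_on_orbit_general (d : ℕ) (A B : Matrix (Fin d) (Fin d) ℂ)
    (hA : A.PosDef) (hB : B.PosDef)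
    (N : Matrix (Fin d) (Fin d) ℂ → ℝ)
    (hN_add : ∀ X Y, N (X + Y) ≤ N X + N Y)
    (hN_smul : ∀ (c : ℂ) (X), N (c • X) = ‖c‖ * N X)
    (hN_ui : ∀ (X U V : Matrix (Fin d) (Fin d) ℂ), U ∈ Matrix.unitaryGroup (Fin d) ℂ →
      V ∈ Matrix.unitaryGroup (Fin d) ℂ → N (U * X * V) = N X) :
    ∀ C₁ : Matrix (Fin d) (Fin d) ℂ, (∃ U ∈ Matrix.unitaryGroup (Fin d) ℂ, C₁ = Uᴴ * B * U) →
      N (Matrix.diagonal (fun i => ((Real.log (sortDesc hB.isHermitian.eigenvalues i)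
          - Real.log (sortDesc hA.isHermitian.eigenvalues i) : ℝ) : ℂ))) ≤
        N (matLog (hA.posSemidef.sqrt⁻¹ * C₁ * hA.posSemidef.sqrt⁻¹)) := by
  rintro _ ⟨U, hU, rfl⟩
  set S := hA.posSemidef.sqrt
  have hS : S.IsHermitian := hA.posSemidef.isHermitian_sqrt
  have hSdet : IsUnit S.det := (isUnit_iff_isUnit_det S).mp hA.isUnit_sqrt
  have hC : (Uᴴ * B * U).PosDef := hB.conjTranspose_mul_mul_same
    (mulVec_injective_iff_isUnit.mpr (Unitary.toUnits ⟨U, hU⟩).isUnit)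
  have hX : (S⁻¹ * (Uᴴ * B * U) * S⁻¹).PosDef := by
    have := hC.conjTranspose_mul_mul_same (B := S⁻¹)
      (mulVec_injective_iff_isUnit.mpr (isUnit_nonsing_inv_iff.mpr hA.isUnit_sqrt))
    rwa [hS.inv.eq] at this
  have hmaj := majorizes_log_eigenvalues hA hC hX hS hA.posSemidef.sqrt_mul_self
    (mul_nonsing_inv_mul_nonsing_inv_mul hSdet _).symm
  rw [hB.isHermitian.eigenvalues_conjTranspose_mul_mul hU hC.isHermitian] at hmaj
  rw [comp_matLog hN_ui hX.isHermitian]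
  exact (convexOn_comp_diagonal hN_add hN_smul).le_of_majorizes (comp_diagonal_comp_perm hN_ui)
    hmaj

/-- For any unitarily invariant norm `N` and any `C` in the unitary orbit of `B`,
`N(log(A^{-1/2} C A^{-1/2})) ≥ N(D_{log λ(B) - log λ(A)})`. -/
theorem lower_bound_on_orbit (d : ℕ) (A B : Matrix (Fin d) (Fin d) ℂ)
    (hA : A.PosDef) (hB : B.PosDef)
    (N : Matrix (Fin d) (Fin d) ℂ → ℝ)
    (hN_add : ∀ X Y, N (X + Y) ≤ N X + N Y)
    (hN_smul : ∀ (c : ℂ) (X), N (c • X) = ‖c‖ * N X)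
    (hN_def : ∀ X, N X = 0 → X = 0)
    (hN_ui : ∀ (X U V : Matrix (Fin d) (Fin d) ℂ), U ∈ Matrix.unitaryGroup (Fin d) ℂ →
      V ∈ Matrix.unitaryGroup (Fin d) ℂ → N (U * X * V) = N X) :
    ∀ C₁ : Matrix (Fin d) (Fin d) ℂ, (∃ U ∈ Matrix.unitaryGroup (Fin d) ℂ, C₁ = Uᴴ * B * U) →
      N (Matrix.diagonal (fun i => ((Real.log (sortDesc hB.isHermitian.eigenvalues i)
          - Real.log (sortDesc hA.isHermitian.eigenvalues i) : ℝ) : ℂ))) ≤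
        N (matLog (hA.posSemidef.sqrt⁻¹ * C₁ * hA.posSemidef.sqrt⁻¹)) :=
  lower_bound_on_orbit_general d A B hA hB N hN_add hN_smul hN_ui
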